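/- arXiv:1505.01746 — 6 statements merged into one kernel-verified Lean document; each statement's English description precedes it below -/
import Mathlib

section
/- Let (Ω, μ) be a probability space and let X, Y : Ω → ℝ be integrable random variables with X ≥ 0 and Y ≥ 0 almost everywhere. Let c ≥ 0 and κ ≥ 0 be real constants, suppose E[X] = m and E[Y] ≤ κ. Then E[log(1 + X)] − E[log(1 + X/(1 + Y + c))] ≤ log((1 + κ + c)/(1 + c/(1 + m))). -/
open MeasureTheory Real

/-! Since `Y ≥ 0`, the interference term splits pointwise:
`log (1 + X) - log (1 + X / (1 + Y + c)) ≤ φ X + log (1 + c + Y)` with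
`φ x = log (1 + x) - log (1 + c + x)`. Both `φ` and `log (1 + c + ·)` are concave, so Jensen's
inequality bounds the expectations by `φ m` and `log (1 + c + E[Y]) ≤ log (1 + c + κ)`. -/

section

open Set

lemma abs_log_add_le {a x : ℝ} (ha : 0 < a) (hx : 0 ≤ x) :
    |log (a + x)| ≤ |log a| + x / a := by
  have hlow : log a ≤ log (a + x) := log_le_log ha (by linarith)
  have hupp : log (a + x) - log a ≤ x / a := by
    rw [← log_div (by linarith) ha.ne']
    calc log ((a + x) / a) ≤ (a + x) / a - 1 := log_le_sub_one_of_pos (by positivity)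
      _ = x / a := by field_simp; ring
  exact abs_le.mpr ⟨by linarith [neg_abs_le (log a), div_nonneg hx ha.le],
    by linarith [le_abs_self (log a)]⟩

lemma log_one_add_div_mem_Icc {x d : ℝ} (hx : 0 ≤ x) (hd : 1 ≤ d) :
    log (1 + x / d) ∈ Icc 0 (log (1 + x)) := by
  have hxd : 0 ≤ x / d := div_nonneg hx (by linarith)
  exact ⟨log_nonneg (by linarith),
    log_le_log (by linarith) (by linarith [div_le_self hx hd])⟩

lemma log_add_sub_log_add_le_log_one_add_div {c x y : ℝ} (hc : 0 ≤ c) (hx : 0 ≤ x)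
    (hy : 0 ≤ y) : log (1 + c + x) - log (1 + c + y) ≤ log (1 + x / (1 + y + c)) := by
  have hden : 0 < 1 + c + y := by linarith
  have hrw : 1 + x / (1 + y + c) = (1 + c + y + x) / (1 + c + y) := by
    field_simp
    ring
  rw [← log_div (by linarith) hden.ne', hrw]
  exact log_le_log (by positivity) (div_le_div_of_nonneg_right (by linarith) hden.le)

lemma log_div_one_add_div_eq {c κ m : ℝ} (hc : 0 ≤ c) (hκ : 0 ≤ κ) (hm : 0 ≤ m) :
    log ((1 + κ + c) / (1 + c / (1 + m)))
      = log (1 + m) - log (1 + c + m) + log (1 + c + κ) := by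
  have hrw : (1 + κ + c) / (1 + c / (1 + m)) = (1 + m) * (1 + c + κ) / (1 + c + m) := by
    field_simp
    ring
  rw [hrw, log_div (by positivity) (by positivity), log_mul (by positivity) (by positivity)]
  ring

lemma concaveOn_log_const_add (a : ℝ) : ConcaveOn ℝ (Ioi (-a)) (fun x => log (a + x)) := by
  have h := strictConcaveOn_log_Ioi.concaveOn.translate_right a
  rwa [preimage_const_add_Ioi, zero_sub] at h

lemma hasDerivAt_log_const_add {a x : ℝ} (hx : 0 < a + x) :
    HasDerivAt (fun x => log (a + x)) (a + x)⁻¹ x := by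
  simpa [one_div] using ((hasDerivAt_id x).const_add a).log hx.ne'

lemma hasDerivAt_inv_const_add {a x : ℝ} (hx : 0 < a + x) :
    HasDerivAt (fun x => (a + x)⁻¹) (-((a + x) ^ 2)⁻¹) x := by
  simpa [neg_div, one_div, Pi.inv_def] using ((hasDerivAt_id x).const_add a).inv hx.ne'

lemma concaveOn_log_add_sub_log_add {a b : ℝ} (hab : a ≤ b) :
    ConcaveOn ℝ (Ioi (-a)) (fun x => log (a + x) - log (b + x)) := by
  have hpos : ∀ x ∈ Ioi (-a), 0 < a + x ∧ 0 < b + x := fun x (hx : -a < x) =>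
    ⟨by linarith, by linarith⟩
  have hf' : ∀ x ∈ Ioi (-a),
      HasDerivAt (fun x => log (a + x) - log (b + x)) ((a + x)⁻¹ - (b + x)⁻¹) x :=
    fun x hx => (hasDerivAt_log_const_add (hpos x hx).1).sub
      (hasDerivAt_log_const_add (hpos x hx).2)
  refine concaveOn_of_hasDerivWithinAt2_nonpos (convex_Ioi _)
    (f' := fun x => (a + x)⁻¹ - (b + x)⁻¹)
    (f'' := fun x => -((a + x) ^ 2)⁻¹ - -((b + x) ^ 2)⁻¹)
    (fun x hx => (hf' x hx).continuousAt.continuousWithinAt) ?_ ?_ ?_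
  all_goals rw [interior_Ioi]
  · exact fun x hx => (hf' x hx).hasDerivWithinAt
  · exact fun x hx => ((hasDerivAt_inv_const_add (hpos x hx).1).sub
      (hasDerivAt_inv_const_add (hpos x hx).2)).hasDerivWithinAt
  · intro x hx
    obtain ⟨ha, hb⟩ := hpos x hx
    have : ((b + x) ^ 2)⁻¹ ≤ ((a + x) ^ 2)⁻¹ :=
      inv_anti₀ (by positivity) (pow_le_pow_left₀ ha.le (by linarith) 2)
    linarith

end

section

variable {Ω : Type*} [MeasurableSpace Ω] {μ : Measure Ω} {f : Ω → ℝ}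

lemma MeasureTheory.Integrable.log_const_add [IsFiniteMeasure μ] {a : ℝ} (ha : 0 < a)
    (hf : Integrable f μ) (hf0 : ∀ᵐ ω ∂μ, 0 ≤ f ω) :
    Integrable (fun ω => log (a + f ω)) μ := by
  refine Integrable.mono' ((integrable_const |log a|).add (hf.div_const a))
    (measurable_log.comp_aemeasurable (hf.aemeasurable.const_add a)).aestronglyMeasurable ?_
  filter_upwards [hf0] with ω h
  exact abs_log_add_le ha h

lemma MeasureTheory.Integrable.log_one_add_div [IsFiniteMeasure μ] {g : Ω → ℝ}
    (hf : Integrable f μ) (hf0 : ∀ᵐ ω ∂μ, 0 ≤ f ω) (hg : AEMeasurable g μ)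
    (hg1 : ∀ᵐ ω ∂μ, 1 ≤ g ω) : Integrable (fun ω => log (1 + f ω / g ω)) μ := by
  refine (hf.log_const_add one_pos hf0).mono
    (measurable_log.comp_aemeasurable (by fun_prop)).aestronglyMeasurable ?_
  filter_upwards [hf0, hg1] with ω hx hd
  obtain ⟨hlow, hupp⟩ := log_one_add_div_mem_Icc hx hd
  rw [norm_of_nonneg hlow, norm_of_nonneg (hlow.trans hupp)]
  exact hupp

-- Concavity on an open set containing `[0, ∞)` supplies the continuity Jensen's inequality needs.
lemma ConcaveOn.integral_comp_le_of_nonneg [IsProbabilityMeasure μ] {g : ℝ → ℝ} {b : ℝ}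
    (hb : b < 0) (hg : ConcaveOn ℝ (Set.Ioi b) g) (hf : Integrable f μ)
    (hf0 : ∀ᵐ ω ∂μ, 0 ≤ f ω) (hgf : Integrable (g ∘ f) μ) :
    ∫ ω, g (f ω) ∂μ ≤ g (∫ ω, f ω ∂μ) := by
  have hsub : Set.Ici 0 ⊆ Set.Ioi b := Set.Ici_subset_Ioi.mpr hb
  exact (hg.subset hsub (convex_Ici 0)).le_map_integral
    ((hg.continuousOn isOpen_Ioi).mono hsub) isClosed_Ici hf0 hf hgf

end

theorem stmt_0_general {Ω : Type*} [MeasurableSpace Ω] (μ : Measure Ω) [IsProbabilityMeasure μ]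
    (X Y : Ω → ℝ) (hXint : Integrable X μ) (hYint : Integrable Y μ)
    (hX0 : ∀ᵐ ω ∂μ, 0 ≤ X ω) (hY0 : ∀ᵐ ω ∂μ, 0 ≤ Y ω)
    (c κ m : ℝ) (hc : 0 ≤ c)
    (hmean : ∫ ω, X ω ∂μ = m) (hYmean : ∫ ω, Y ω ∂μ ≤ κ) :
    (∫ ω, Real.log (1 + X ω) ∂μ) - (∫ ω, Real.log (1 + X ω / (1 + Y ω + c)) ∂μ)
      ≤ Real.log ((1 + κ + c) / (1 + c / (1 + m))) := by
  have hEY : 0 ≤ ∫ ω, Y ω ∂μ := integral_nonneg_of_ae hY0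
  have hc1 : 0 < 1 + c := by linarith
  have hlogX := hXint.log_const_add one_pos hX0
  have hφX := hlogX.sub (hXint.log_const_add hc1 hX0)
  have hψY := hYint.log_const_add hc1 hY0
  have hrate := hXint.log_one_add_div hX0 (g := fun ω => 1 + Y ω + c) (by fun_prop)
    (by filter_upwards [hY0] with ω hy; linarith)
  have hJX := (concaveOn_log_add_sub_log_add (a := 1) (b := 1 + c) (by linarith))
    |>.integral_comp_le_of_nonneg (by norm_num) hXint hX0 hφX
  have hJY := (concaveOn_log_const_add (1 + c)).integral_comp_le_of_nonneg
    (by linarith) hYint hY0 hψY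
  rw [hmean] at hJX
  calc (∫ ω, log (1 + X ω) ∂μ) - ∫ ω, log (1 + X ω / (1 + Y ω + c)) ∂μ
      = ∫ ω, (log (1 + X ω) - log (1 + X ω / (1 + Y ω + c))) ∂μ :=
        (integral_sub hlogX hrate).symm
    _ ≤ ∫ ω, ((log (1 + X ω) - log (1 + c + X ω)) + log (1 + c + Y ω)) ∂μ := by
        refine integral_mono_ae (hlogX.sub hrate) (hφX.add hψY) ?_
        filter_upwards [hX0, hY0] with ω hx hy
        linarith [log_add_sub_log_add_le_log_one_add_div hc hx hy]
    _ = (∫ ω, (log (1 + X ω) - log (1 + c + X ω)) ∂μ) + ∫ ω, log (1 + c + Y ω) ∂μ :=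
        integral_add hφX hψY
    _ ≤ log (1 + m) - log (1 + c + m) + log (1 + c + κ) :=
        add_le_add hJX (hJY.trans (log_le_log (by linarith) (by linarith)))
    _ = log ((1 + κ + c) / (1 + c / (1 + m))) :=
        (log_div_one_add_div_eq hc (hEY.trans hYmean) (hmean ▸ integral_nonneg_of_ae hX0)).symm

/-- core of Theorem 1, impact of inter-node interference.
If `X, Y` are nonnegative integrable random variables on a probability space with
`E[X] = m` and `E[Y] ≤ κ`, and `c ≥ 0`, `κ ≥ 0`, then
`E[log(1+X)] − E[log(1 + X/(1+Y+c))] ≤ log((1+κ+c)/(1+c/(1+m)))`. -/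
theorem stmt_0 {Ω : Type*} [MeasurableSpace Ω] (μ : Measure Ω) [IsProbabilityMeasure μ]
    (X Y : Ω → ℝ) (hXint : Integrable X μ) (hYint : Integrable Y μ)
    (hX0 : ∀ᵐ ω ∂μ, 0 ≤ X ω) (hY0 : ∀ᵐ ω ∂μ, 0 ≤ Y ω)
    (c κ m : ℝ) (hc : 0 ≤ c) (hκ : 0 ≤ κ)
    (hmean : ∫ ω, X ω ∂μ = m) (hYmean : ∫ ω, Y ω ∂μ ≤ κ) :
    (∫ ω, Real.log (1 + X ω) ∂μ) - (∫ ω, Real.log (1 + X ω / (1 + Y ω + c)) ∂μ)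
      ≤ Real.log ((1 + κ + c) / (1 + c / (1 + m))) :=
  stmt_0_general μ X Y hXint hYint hX0 hY0 c κ m hc hmean hYmean
end

section
/- Let T > 0, a > 0, b > 0 be real numbers and R ∈ ℝ. The function g(x) := ((T − x)/T) · (R − log(1 + a/(1 + b x))) is concave on the interval [0, T]. -/
/-!
Write `g = R u - u k` with `u x = (T - x) / T` and `k x = log (1 + a / (1 + b x))`. On `[0, T]`
both `u` and `k` are nonnegative, convex and antitone, so their product is convex
(Chebyshev-type product rule `ConvexOn.mul`); since `R u` is affine, `g` is concave. Convexity of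
`k` comes from that of `y ↦ log (1 + a / y)`, whose derivative `-a / (y (y + a))` is increasing.
-/

open Real Set

lemma convexOn_mul_add {s : Set ℝ} (hs : Convex ℝ s) (m c : ℝ) :
    ConvexOn ℝ s fun x => m * x + c :=
  ((LinearMap.mulLeft ℝ m).convexOn hs).add_const c

lemma concaveOn_mul_add {s : Set ℝ} (hs : Convex ℝ s) (m c : ℝ) :
    ConcaveOn ℝ s fun x => m * x + c :=
  ((LinearMap.mulLeft ℝ m).concaveOn hs).add_const c

lemma hasDerivAt_log_one_add_div {a y : ℝ} (ha : 0 ≤ a) (hy : 0 < y) :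
    HasDerivAt (fun y => log (1 + a / y)) (-(a / (y * (y + a)))) y := by
  have hinv : HasDerivAt (fun y => 1 + a / y) (-(a / y ^ 2)) y := by
    simpa [div_eq_mul_inv] using ((hasDerivAt_inv hy.ne').const_mul a).const_add 1
  convert hinv.log (by positivity) using 1
  field_simp

lemma convexOn_log_one_add_div {a : ℝ} (ha : 0 ≤ a) :
    ConvexOn ℝ (Ioi 0) fun y => log (1 + a / y) := by
  refine MonotoneOn.convexOn_of_deriv (convex_Ioi 0) ?_ ?_ ?_
  · exact fun y hy => (hasDerivAt_log_one_add_div ha hy).continuousAt.continuousWithinAt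
  · rw [interior_Ioi]
    exact fun y hy => (hasDerivAt_log_one_add_div ha hy).differentiableAt.differentiableWithinAt
  · rw [interior_Ioi]
    intro x hx y hy hxy
    rw [(hasDerivAt_log_one_add_div ha hx).deriv, (hasDerivAt_log_one_add_div ha hy).deriv]
    have hx : 0 < x := hx
    have hy : 0 < y := hy
    gcongr

lemma antitoneOn_log_one_add_div {a : ℝ} (ha : 0 ≤ a) :
    AntitoneOn (fun y => log (1 + a / y)) (Ioi 0) := by
  intro x hx y hy hxy
  have hx : 0 < x := hx
  have hy : 0 < y := hy
  exact log_le_log (by positivity) (by gcongr)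

lemma convexOn_log_one_add_div_one_add_mul {a b : ℝ} (ha : 0 ≤ a) (hb : 0 ≤ b) :
    ConvexOn ℝ (Ici 0) fun x => log (1 + a / (1 + b * x)) := by
  have hcomp := (convexOn_log_one_add_div ha).comp_affineMap
    (b • AffineMap.id ℝ ℝ + AffineMap.const ℝ ℝ 1)
  refine (hcomp.subset (fun x hx => ?_) (convex_Ici 0)).congr fun x _ => ?_
  · have hx : 0 ≤ x := hx
    show 0 < b * x + 1
    positivity
  · simp [add_comm]

lemma antitoneOn_log_one_add_div_one_add_mul {a b : ℝ} (ha : 0 ≤ a) (hb : 0 ≤ b) :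
    AntitoneOn (fun x => log (1 + a / (1 + b * x))) (Ici 0) :=
  (antitoneOn_log_one_add_div ha).comp_MonotoneOn
    (fun x _ y _ hxy => by gcongr)
    (fun x (hx : 0 ≤ x) => show 0 < 1 + b * x by positivity)

theorem stmt_8_general (T a b R : ℝ) (ha : 0 < a) (hb : 0 < b) :
    ConcaveOn ℝ (Set.Icc (0 : ℝ) T)
      (fun x : ℝ => ((T - x) / T) * (R - Real.log (1 + a / (1 + b * x)))) := by
  set u : ℝ → ℝ := fun x => (T - x) / T
  set k : ℝ → ℝ := fun x => log (1 + a / (1 + b * x))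
  have hIcc : Icc 0 T ⊆ Ici 0 := Icc_subset_Ici_self
  -- `T / T` rather than `1` keeps these affine identities true when `T = 0`, where `u = 0`.
  have hu_convex : ConvexOn ℝ (Icc 0 T) u :=
    (convexOn_mul_add (convex_Icc 0 T) (-T⁻¹) (T / T)).congr fun x _ => by
      simp only [u]; ring
  have hu_anti : AntitoneOn u (Icc 0 T) := fun x hx y _ hxy => by
    have : 0 ≤ T := hx.1.trans hx.2
    simp only [u]; gcongr
  have hu_nonneg : ∀ ⦃x⦄, x ∈ Icc 0 T → 0 ≤ u x := fun x hx =>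
    div_nonneg (sub_nonneg.2 hx.2) (hx.1.trans hx.2)
  have hk_nonneg : ∀ ⦃x⦄, x ∈ Icc 0 T → 0 ≤ k x := fun x hx => by
    have hx : 0 ≤ x := hx.1
    exact log_nonneg (le_add_of_nonneg_right (by positivity))
  have huk : ConvexOn ℝ (Icc 0 T) (u * k) :=
    hu_convex.mul ((convexOn_log_one_add_div_one_add_mul ha.le hb.le).subset hIcc (convex_Icc 0 T))
      hu_nonneg hk_nonneg
      (hu_anti.monovaryOn ((antitoneOn_log_one_add_div_one_add_mul ha.le hb.le).mono hIcc))
  have hRu : ConcaveOn ℝ (Icc 0 T) fun x => -(R / T) * x + R * (T / T) :=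
    concaveOn_mul_add (convex_Icc 0 T) _ _
  refine (hRu.sub huk).congr fun x _ => ?_
  simp only [Pi.sub_apply, Pi.mul_apply, u, k]
  ring

/-- The half-duplex spectral efficiency
`g(x) = ((T − x)/T)·(R − log(1 + a/(1 + b x)))` is concave on `[0, T]`
for `T > 0`, `a > 0`, `b > 0` and any real `R`. -/
theorem stmt_8 (T a b R : ℝ) (hT : 0 < T) (ha : 0 < a) (hb : 0 < b) :
    ConcaveOn ℝ (Set.Icc (0 : ℝ) T)
      (fun x : ℝ => ((T - x) / T) * (R - Real.log (1 + a / (1 + b * x)))) :=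
  stmt_8_general T a b R ha hb
end

section
/- Let M ≥ 2 be an integer and let P > 0, f > 0, R > 0, T > 0 be real numbers. Set x := √((M − 1)·T/(f·R)) and assume x ≤ T. Then R − ((T − x)/T)·(R − log(1 + ((M−1)·P/M)/(1 + f·x·P/M))) ≤ 2·√((M − 1)·R/(f·T)). -/
open Real

/-- Theorem 4. The spectral efficiency loss of the half-duplex
open-loop training system at the approximately optimal training duration
`x = √((M−1)T/(fR))` is at most `2√((M−1)R/(fT))`. -/
theorem stmt_11 (M : ℕ) (hM : 2 ≤ M) (P f R T : ℝ) (hP : 0 < P) (hf : 0 < f)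
    (hR : 0 < R) (hT : 0 < T) (x : ℝ) (hx : x = Real.sqrt (((M : ℝ) - 1) * T / (f * R)))
    (hxT : x ≤ T) :
    R - ((T - x) / T) *
        (R - Real.log (1 + (((M : ℝ) - 1) * P / M) / (1 + f * x * P / M)))
      ≤ 2 * Real.sqrt (((M : ℝ) - 1) * R / (f * T)) := by
  set m : ℝ := (M : ℝ) - 1 with hm_def
  have hMR : (2 : ℝ) ≤ (M : ℝ) := by exact_mod_cast hM
  have hm : (1 : ℝ) ≤ m := by simp [hm_def]; linarith
  have hM0 : (0 : ℝ) < (M : ℝ) := by linarith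
  have hx0 : 0 < x := by
    rw [hx]
    apply Real.sqrt_pos.mpr
    positivity
  have hx2 : x ^ 2 = m * T / (f * R) := by
    rw [hx, Real.sq_sqrt (by positivity : (0:ℝ) ≤ m * T / (f * R))]
  set A : ℝ := (m * P / M) / (1 + f * x * P / M) with hA_def
  have hden : (0:ℝ) < 1 + f * x * P / M := by positivity
  have hA0 : 0 ≤ A := by positivity
  have hAle : A ≤ m / (f * x) := by
    rw [hA_def, div_le_div_iff₀ hden (by positivity)]
    rw [div_mul_eq_mul_div, div_le_iff₀ hM0]
    have hd2 : m * (f * x * P / M) * M = m * (f * x * P) := by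
      field_simp
    nlinarith [hd2, hM0, hm]
  have hL0 : 0 ≤ Real.log (1 + A) := Real.log_nonneg (by linarith)
  have hLle : Real.log (1 + A) ≤ m / (f * x) := by
    have := Real.log_le_sub_one_of_pos (by linarith : (0:ℝ) < 1 + A)
    linarith
  have hkey : m / (f * x) = x * R / T := by
    rw [div_eq_div_iff (by positivity) (by positivity)]
    have : x ^ 2 * (f * R) = m * T := by
      rw [hx2]; field_simp
    nlinarith [this]
  have hsqrt : Real.sqrt (m * R / (f * T)) = x * R / T := by
    have hsq : (x * R / T) ^ 2 = m * R / (f * T) := by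
      rw [div_pow, mul_pow, hx2]
      field_simp
    rw [← hsq, Real.sqrt_sq (by positivity)]
  have hfrac : (T - x) / T ≤ 1 := by
    rw [div_le_one hT]; linarith
  have hmul : ((T - x) / T) * Real.log (1 + A) ≤ x * R / T := by
    calc ((T - x) / T) * Real.log (1 + A) ≤ 1 * Real.log (1 + A) :=
          mul_le_mul_of_nonneg_right hfrac hL0
      _ = Real.log (1 + A) := one_mul _
      _ ≤ m / (f * x) := hLle
      _ = x * R / T := hkey
  have hexpand : R - ((T - x) / T) * (R - Real.log (1 + A)) =
      (x / T) * R + ((T - x) / T) * Real.log (1 + A) := by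
    field_simp
    ring
  rw [hexpand, hsqrt]
  have : (x / T) * R = x * R / T := by ring
  linarith [hmul]
end

section
/- Let M ≥ 1 be an integer, P > 0, f > 0, α > 0 real, and let β ≥ 1 be a natural number. Then log((1 + (P/M)·(M−1)/(1 + β f P) + α f P)/(1 + α f P/(1 + P/M))) ≤ Δ̃ + log(1 + (M−1)/(M f β)), where Δ̃ := log((1 + α f P)/(1 + α f P/(1 + P/M))). -/
open Real

/-- per-term decomposition, key step of Theorem 3, Appendix C.
For `M ≥ 1`, `P, f, α > 0` and a natural number `β ≥ 1`,
`D(β) ≤ Δ̃ + log(1 + (M−1)/(M f β))`, where `D(β)` is the Theorem 1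
rate-loss bound and `Δ̃` is the invariant INI rate loss. -/
theorem stmt_12 (M : ℕ) (hM : 1 ≤ M) (P f α : ℝ) (hP : 0 < P) (hf : 0 < f) (hα : 0 < α)
    (β : ℕ) (hβ : 1 ≤ β) :
    Real.log ((1 + (P / M) * ((M : ℝ) - 1) / (1 + (β : ℝ) * f * P) + α * f * P) /
        (1 + α * f * P / (1 + P / M)))
      ≤ Real.log ((1 + α * f * P) / (1 + α * f * P / (1 + P / M))) +
        Real.log (1 + ((M : ℝ) - 1) / ((M : ℝ) * f * β)) := by
  have hM1 : (1:ℝ) ≤ (M:ℝ) := by exact_mod_cast hM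
  have hβ1 : (1:ℝ) ≤ (β:ℝ) := by exact_mod_cast hβ
  have hMpos : (0:ℝ) < M := by linarith
  have hβpos : (0:ℝ) < β := by linarith
  have hCpos : 0 < 1 + α * f * P / (1 + P / M) := by positivity
  have hBpos : 0 < 1 + α * f * P := by positivity
  have hDpos : 0 < 1 + ((M : ℝ) - 1) / ((M : ℝ) * f * β) := by
    have : (0:ℝ) ≤ ((M : ℝ) - 1) / ((M : ℝ) * f * β) := by
      apply div_nonneg (by linarith) (by positivity)
    linarith
  have hApos : 0 < 1 + (P / M) * ((M : ℝ) - 1) / (1 + (β : ℝ) * f * P) + α * f * P := by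
    have h1 : (0:ℝ) ≤ (P / M) * ((M : ℝ) - 1) / (1 + (β : ℝ) * f * P) := by
      apply div_nonneg
      · apply mul_nonneg (by positivity); linarith
      · positivity
    have h2 : (0:ℝ) < α * f * P := by positivity
    linarith
  have hkey : 1 + (P / M) * ((M : ℝ) - 1) / (1 + (β : ℝ) * f * P) + α * f * P
      ≤ (1 + α * f * P) * (1 + ((M : ℝ) - 1) / ((M : ℝ) * f * β)) := by
    have h1 : (P / M) * ((M : ℝ) - 1) / (1 + (β : ℝ) * f * P)
        ≤ ((M : ℝ) - 1) / ((M : ℝ) * f * β) := by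
      rw [div_le_div_iff₀ (by positivity) (by positivity)]
      have hM0 : (0:ℝ) ≤ (M:ℝ) - 1 := by linarith
      have : P / M * ((M:ℝ) * f * β) ≤ 1 * (1 + (β:ℝ) * f * P) := by
        rw [div_mul_eq_mul_div, div_le_iff₀ hMpos]
        nlinarith
      nlinarith
    have h2 : 0 ≤ α * f * P * (((M : ℝ) - 1) / ((M : ℝ) * f * β)) := by
      apply mul_nonneg (by positivity)
      apply div_nonneg (by linarith) (by positivity)
    nlinarith
  calc Real.log ((1 + (P / M) * ((M : ℝ) - 1) / (1 + (β : ℝ) * f * P) + α * f * P) /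
        (1 + α * f * P / (1 + P / M)))
      ≤ Real.log ((1 + α * f * P) * (1 + ((M : ℝ) - 1) / ((M : ℝ) * f * β)) /
        (1 + α * f * P / (1 + P / M))) := by
        apply Real.log_le_log (by positivity)
        gcongr
    _ = Real.log ((1 + α * f * P) / (1 + α * f * P / (1 + P / M))) +
        Real.log (1 + ((M : ℝ) - 1) / ((M : ℝ) * f * β)) := by
        rw [mul_div_right_comm, Real.log_mul (by positivity) (by linarith)]
end

section
/- Let M ≥ 1 be an integer, P > 0, f > 0, α > 0 real, and let n ≥ 3 be a natural number. Then ∑_{β=2}^{n−1} log((1 + (P/M)·(M−1)/(1 + β f P) + α f P)/(1 + α f P/(1 + P/M))) ≤ (n − 2)·Δ̃ + ((M−1)/(M f))·log(n − 1), where Δ̃ := log((1 + α f P)/(1 + α f P/(1 + P/M))). -/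
/-!
Write `a = αfP` and `Δ̃ = log ((1 + a) / (1 + a / (1 + P/M)))`. The `β`-th summand exceeds `Δ̃`
only through the pilot term `X_β = (P/M)(M-1)/(1 + βfP)` added to `1 + a`, so by
`log (1 + a + X) ≤ log (1 + a) + X` it is at most `Δ̃ + X_β ≤ Δ̃ + (M-1)/(Mf) · β⁻¹`.
Summing over `2 ≤ β ≤ n - 1` leaves the tail `∑ β⁻¹` of the harmonic series, which is at most
`log (n - 1)`.
-/

open Real Finset

lemma Real.log_add_le_log_add_div {A X : ℝ} (hA : 0 < A) (hAX : 0 < A + X) :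
    log (A + X) ≤ log A + X / A := by
  have h := log_le_sub_one_of_pos (div_pos hAX hA)
  rw [log_div hAX.ne' hA.ne', add_div, div_self hA.ne'] at h
  linarith

lemma sum_Icc_two_inv_le_log (m : ℕ) : ∑ k ∈ Icc 2 m, (k : ℝ)⁻¹ ≤ log m := by
  rcases Nat.eq_zero_or_pos m with rfl | hm
  · simp
  have h := harmonic_le_one_add_log m
  rw [harmonic_eq_sum_Icc, Rat.cast_sum, ← insert_Icc_add_one_left_eq_Icc hm,
    sum_insert (by simp)] at h
  push_cast at h
  linarith

lemma pilot_term_le_inv {M P f β : ℝ} (hM : 1 ≤ M) (hP : 0 < P) (hf : 0 < f) (hβ : 0 < β) :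
    P / M * (M - 1) / (1 + β * f * P) ≤ (M - 1) / (M * f) * β⁻¹ := by
  have hM0 : 0 < M := by linarith
  calc P / M * (M - 1) / (1 + β * f * P)
      ≤ P / M * (M - 1) / (β * f * P) :=
        div_le_div_of_nonneg_left (by have := sub_nonneg.2 hM; positivity) (by positivity)
          (by linarith)
    _ = (M - 1) / (M * f) * β⁻¹ := by field_simp

lemma rate_loss_bound_le {M P f α β : ℝ} (hM : 1 ≤ M) (hP : 0 < P) (hf : 0 < f) (hα : 0 < α)
    (hβ : 0 < β) :
    log ((1 + P / M * (M - 1) / (1 + β * f * P) + α * f * P) / (1 + α * f * P / (1 + P / M)))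
      ≤ log ((1 + α * f * P) / (1 + α * f * P / (1 + P / M))) + (M - 1) / (M * f) * β⁻¹ := by
  set X := P / M * (M - 1) / (1 + β * f * P)
  set a := α * f * P
  have hM0 : 0 < M := by linarith
  have ha : 0 < a := by positivity
  have hX : 0 ≤ X := by have := sub_nonneg.2 hM; positivity
  have hC : 0 < 1 + a / (1 + P / M) := by positivity
  have hlog := log_add_le_log_add_div (A := 1 + a) (X := X) (by positivity) (by positivity)
  have hXa : X / (1 + a) ≤ X := div_le_self hX (by linarith)
  have hpilot := pilot_term_le_inv hM hP hf hβ
  rw [add_right_comm, log_div (by positivity) hC.ne', log_div (by positivity) hC.ne']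
  linarith

/-- main sum estimate in the proof of Theorem 3, Appendix C.
For `M ≥ 1`, `P, f, α > 0` and a natural number `n ≥ 3`,
`∑_{β=2}^{n−1} D(β) ≤ (n−2)·Δ̃ + ((M−1)/(Mf))·log(n−1)`, where `D(β)` is the
Theorem 1 rate-loss bound and `Δ̃` the invariant INI rate loss. -/
theorem stmt_13 (M : ℕ) (hM : 1 ≤ M) (P f α : ℝ) (hP : 0 < P) (hf : 0 < f) (hα : 0 < α)
    (n : ℕ) (hn : 3 ≤ n) :
    ∑ β ∈ Finset.Icc 2 (n - 1),
        Real.log ((1 + (P / M) * ((M : ℝ) - 1) / (1 + (β : ℝ) * f * P) + α * f * P) /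
          (1 + α * f * P / (1 + P / M)))
      ≤ ((n : ℝ) - 2) * Real.log ((1 + α * f * P) / (1 + α * f * P / (1 + P / M))) +
        (((M : ℝ) - 1) / ((M : ℝ) * f)) * Real.log ((n : ℝ) - 1) := by
  set Δ := log ((1 + α * f * P) / (1 + α * f * P / (1 + P / M)))
  set c := ((M : ℝ) - 1) / (M * f)
  have hM' : (1 : ℝ) ≤ M := by exact_mod_cast hM
  have hc : 0 ≤ c := by have := sub_nonneg.2 hM'; positivity
  have hcard : ((#(Icc 2 (n - 1)) : ℕ) : ℝ) = n - 2 := by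
    rw [Nat.card_Icc, Nat.cast_sub (by omega)]; push_cast [Nat.cast_sub (by omega : 1 ≤ n)]; ring
  have hharm : ∑ β ∈ Icc 2 (n - 1), (β : ℝ)⁻¹ ≤ log (n - 1) := by
    simpa [Nat.cast_sub (by omega : 1 ≤ n)] using sum_Icc_two_inv_le_log (n - 1)
  calc _ ≤ ∑ β ∈ Icc 2 (n - 1), (Δ + c * (β : ℝ)⁻¹) := sum_le_sum fun β hβ ↦
          rate_loss_bound_le hM' hP hf hα (by have := (mem_Icc.1 hβ).1; positivity)
    _ = (n - 2) * Δ + c * ∑ β ∈ Icc 2 (n - 1), (β : ℝ)⁻¹ := by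
          rw [sum_add_distrib, sum_const, nsmul_eq_mul, hcard, mul_sum]
    _ ≤ (n - 2) * Δ + c * log (n - 1) := by gcongr
end

section
/- Let M ≥ 1 be an integer and P > 0, f > 0, α > 0, R ≥ 0 real. Define Δ̃ := log((1 + α f P)/(1 + α f P/(1 + P/M))), D(β) := log((1 + (P/M)·(M−1)/(1 + β f P) + α f P)/(1 + α f P/(1 + P/M))), and for real T > 0 set x(T) := √(M·T/(f·Δ̃)), n(T) := ⌊x(T)/M⌋, and L(T) := (2M/T)·R + (M/T)·∑_{β=2}^{n(T)−1} D(β) + (1 − x(T)/T)·log(1 + ((M−1)·P/M)/(1 + f·x(T)·P/M)). Then limsup_{T→∞} √T · L(T) ≤ 2·√(M·Δ̃/f). -/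
open Real Filter Finset

/-- Invariant INI rate loss `Δ̃` (Equation (5)). -/
noncomputable def invINIloss (M : ℕ) (P f α : ℝ) : ℝ :=
  Real.log ((1 + α * f * P) / (1 + α * f * P / (1 + P / M)))

/-- Theorem 1 rate-loss bound `D(β)` after `β` pilots per user. -/
noncomputable def Dloss (M : ℕ) (P f α : ℝ) (β : ℕ) : ℝ :=
  Real.log ((1 + (P / M) * ((M : ℝ) - 1) / (1 + (β : ℝ) * f * P) + α * f * P) /
    (1 + α * f * P / (1 + P / M)))

/-- Approximately optimal CAB training duration `x(T) = √(MT/(fΔ̃))`. -/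
noncomputable def xCAB (M : ℕ) (P f α : ℝ) (T : ℝ) : ℝ :=
  Real.sqrt ((M : ℝ) * T / (f * invINIloss M P f α))

/-- Number of training cycles `n(T) = ⌊x(T)/M⌋`. -/
noncomputable def nCAB (M : ℕ) (P f α : ℝ) (T : ℝ) : ℕ :=
  Nat.floor (xCAB M P f α T / M)

/-- Appendix C upper bound `L(T)` on the spectral efficiency loss of CAB at the
approximately optimal training duration. -/
noncomputable def Lloss (M : ℕ) (P f α R : ℝ) (T : ℝ) : ℝ :=
  (2 * M / T) * R +
    ((M : ℝ) / T) * ∑ β ∈ Finset.Icc 2 (nCAB M P f α T - 1), Dloss M P f α β +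
    (1 - xCAB M P f α T / T) *
      Real.log (1 + (((M : ℝ) - 1) * P / M) / (1 + f * xCAB M P f α T * P / M))

lemma harmonic_sqrt (m : ℕ) : ∑ β ∈ Finset.Icc 2 m, (1:ℝ)/β ≤ 2 * Real.sqrt m := by
  induction m with
  | zero => simp
  | succ m ih =>
    rcases Nat.lt_or_ge (m+1) 2 with h | h
    · have hm : m = 0 := by omega
      subst hm
      norm_num [show Finset.Icc 2 1 = ∅ from rfl, Real.sqrt_one]
    · rw [Finset.sum_Icc_succ_top h]
      have hm0 : (0:ℝ) ≤ (m:ℝ) := by positivity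
      have hm1 : (0:ℝ) ≤ (m:ℝ) + 1 := by positivity
      have ha : Real.sqrt m * Real.sqrt m = m := Real.mul_self_sqrt hm0
      have hb : Real.sqrt ((m:ℝ)+1) * Real.sqrt ((m:ℝ)+1) = (m:ℝ)+1 :=
        Real.mul_self_sqrt hm1
      have ha0 : 0 ≤ Real.sqrt m := Real.sqrt_nonneg _
      have hb0 : 0 ≤ Real.sqrt ((m:ℝ)+1) := Real.sqrt_nonneg _
      have hab : Real.sqrt (m:ℝ) ≤ Real.sqrt ((m:ℝ)+1) := Real.sqrt_le_sqrt (by linarith)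
      have hbm : Real.sqrt ((m:ℝ)+1) ≤ (m:ℝ)+1 := by nlinarith
      have hkey : 1/((m:ℝ)+1) ≤ 2*(Real.sqrt ((m:ℝ)+1) - Real.sqrt m) := by
        rw [div_le_iff₀ (by positivity)]
        nlinarith [mul_nonneg (sub_nonneg.2 hab) (sub_nonneg.2 (by linarith :
          Real.sqrt (m:ℝ) + Real.sqrt ((m:ℝ)+1) ≤ 2*((m:ℝ)+1)))]
      push_cast
      push_cast at ih
      linarith

lemma tendsto_sqrt_atTop' : Tendsto Real.sqrt atTop atTop := by
  refine tendsto_atTop_atTop.2 fun b => ⟨(max b 0)^2, fun a ha => ?_⟩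
  have h1 : Real.sqrt ((max b 0)^2) ≤ Real.sqrt a := Real.sqrt_le_sqrt ha
  rw [Real.sqrt_sq (le_max_right b 0)] at h1
  exact (le_max_left b 0).trans h1


set_option maxHeartbeats 2000000 in
/-- Theorem 3. The spectral efficiency loss bound `L(T)` of
the CAB strategy with approximately optimal training duration satisfies
`limsup_{T→∞} √T·L(T) ≤ 2√(MΔ̃/f)`. -/
theorem stmt_15 (M : ℕ) (hM : 1 ≤ M) (P f α R : ℝ) (hP : 0 < P) (hf : 0 < f)
    (hα : 0 < α) (hR : 0 ≤ R) :
    Filter.limsup (fun T : ℝ => Real.sqrt T * Lloss M P f α R T) Filter.atTop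
      ≤ 2 * Real.sqrt ((M : ℝ) * invINIloss M P f α / f) := by
  have hM1 : (1:ℝ) ≤ (M:ℝ) := by exact_mod_cast hM
  have hM0 : (0:ℝ) < M := by linarith
  obtain ⟨Δ, hΔdef⟩ : ∃ Δ, Δ = invINIloss M P f α := ⟨_, rfl⟩
  rw [show invINIloss M P f α = Δ from hΔdef.symm]
  have hq : (1:ℝ) < 1 + P/M := by
    have : 0 < P/M := by positivity
    linarith
  have hB : 0 < α*f*P := by positivity
  have hden : 0 < 1 + α*f*P/(1+P/M) := by positivity
  have hU : (0:ℝ) < 1 + α*f*P := by linarith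
  have hdlt : α*f*P/(1+P/M) < α*f*P := div_lt_self hB hq
  have hΔ : 0 < Δ := by
    rw [hΔdef, invINIloss]
    apply Real.log_pos
    rw [lt_div_iff₀ hden]
    linarith
  obtain ⟨s, hsdef⟩ : ∃ s, s = Real.sqrt ((M:ℝ)/(f*Δ)) := ⟨_, rfl⟩
  have hs : 0 < s := by
    rw [hsdef]; exact Real.sqrt_pos.2 (div_pos hM0 (mul_pos hf hΔ))
  have hss : s*s = (M:ℝ)/(f*Δ) := by
    rw [hsdef]; exact Real.mul_self_sqrt (div_pos hM0 (mul_pos hf hΔ)).le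
  have hfsΔ : f*s*(s*Δ) = M := by
    have h : s*s*(f*Δ) = M := by
      rw [hss]; field_simp
    linear_combination h
  have htarget : Real.sqrt ((M:ℝ)*Δ/f) = s*Δ := by
    have h : (M:ℝ)*Δ/f = ((M:ℝ)/(f*Δ)) * Δ^2 := by
      field_simp
    rw [h, Real.sqrt_mul (div_pos hM0 (mul_pos hf hΔ)).le, Real.sqrt_sq hΔ.le, hsdef]
  have hxeq : ∀ T:ℝ, 0 ≤ T → xCAB M P f α T = s * Real.sqrt T := by
    intro T hT
    rw [xCAB, ← hΔdef, hsdef, ← Real.sqrt_mul (div_pos hM0 (mul_pos hf hΔ)).le]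
    congr 1
    ring
  obtain ⟨c, hcdef⟩ : ∃ c, c = P/M*((M:ℝ)-1)/(f*P) := ⟨_, rfl⟩
  have hc0 : 0 ≤ c := by
    rw [hcdef]
    exact div_nonneg (mul_nonneg (by positivity) (by linarith)) (by positivity)
  obtain ⟨w, hwdef⟩ : ∃ w, w = Real.sqrt (s/M) := ⟨_, rfl⟩
  have hw0 : 0 ≤ w := by rw [hwdef]; exact Real.sqrt_nonneg _
  obtain ⟨c2, hc2def⟩ : ∃ c2, c2 = 2*(M:ℝ)*c*w := ⟨_, rfl⟩
  have hc20 : 0 ≤ c2 := by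
    rw [hc2def]; exact mul_nonneg (mul_nonneg (by positivity) hc0) hw0
  -- nonnegativity of Dloss
  have hD0 : ∀ β:ℕ, 0 ≤ Dloss M P f α β := by
    intro β
    rw [Dloss]
    apply Real.log_nonneg
    rw [le_div_iff₀ hden, one_mul]
    have h1 : 0 ≤ (P/M) * ((M:ℝ)-1) / (1 + (β:ℝ)*f*P) :=
      div_nonneg (mul_nonneg (by positivity) (by linarith)) (by positivity)
    linarith
  -- Dloss upper bound
  have hDle : ∀ β:ℕ, 1 ≤ β → Dloss M P f α β ≤ Δ + c * (1/β) := by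
    intro β hβ
    have hb1 : (1:ℝ) ≤ (β:ℝ) := by exact_mod_cast hβ
    have hβP : 0 < (β:ℝ)*f*P := mul_pos (mul_pos (by linarith) hf) hP
    have hNden : (0:ℝ) < 1 + (β:ℝ)*f*P := by linarith
    have hA' : 0 ≤ P/M * ((M:ℝ)-1) / (1 + (β:ℝ)*f*P) :=
      div_nonneg (mul_nonneg (by positivity) (by linarith)) hNden.le
    have hN : (0:ℝ) < 1 + P/M * ((M:ℝ)-1) / (1 + (β:ℝ)*f*P) + α*f*P := by linarith
    have hDval : Dloss M P f α β =
        Real.log (1 + P/M * ((M:ℝ)-1) / (1 + (β:ℝ)*f*P) + α*f*P)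
          - Real.log (1 + α*f*P/(1+P/M)) := by
      rw [Dloss, Real.log_div hN.ne' hden.ne']
    have hΔval : Δ = Real.log (1 + α*f*P) - Real.log (1 + α*f*P/(1+P/M)) := by
      rw [hΔdef, invINIloss, Real.log_div hU.ne' hden.ne']
    have hlogNU : Real.log (1 + P/M * ((M:ℝ)-1) / (1 + (β:ℝ)*f*P) + α*f*P)
        - Real.log (1 + α*f*P) ≤ c * (1/β) := by
      have h1 : Real.log ((1 + P/M * ((M:ℝ)-1) / (1 + (β:ℝ)*f*P) + α*f*P)/(1+α*f*P))
          ≤ (1 + P/M * ((M:ℝ)-1) / (1 + (β:ℝ)*f*P) + α*f*P)/(1+α*f*P) - 1 :=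
        Real.log_le_sub_one_of_pos (div_pos hN hU)
      rw [Real.log_div hN.ne' hU.ne'] at h1
      have e1 : (1 + P/M * ((M:ℝ)-1) / (1 + (β:ℝ)*f*P) + α*f*P)/(1+α*f*P) - 1
          = (P/M * ((M:ℝ)-1))/((1 + (β:ℝ)*f*P)*(1+α*f*P)) := by
        field_simp
        ring
      have e2 : (P/M * ((M:ℝ)-1))/((1 + (β:ℝ)*f*P)*(1+α*f*P))
          ≤ (P/M * ((M:ℝ)-1))/((β:ℝ)*f*P) := by
        apply div_le_div_of_nonneg_left (mul_nonneg (by positivity) (by linarith)) hβP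
        nlinarith
      have e3 : (P/M * ((M:ℝ)-1))/((β:ℝ)*f*P) = c * (1/β) := by
        rw [hcdef]
        ring
      linarith
    rw [hDval, hΔval]
    linarith
  -- the decaying part tends to 0
  have hgt : Tendsto (fun T:ℝ => 2*(M:ℝ)*R/Real.sqrt T + c2/Real.sqrt (Real.sqrt T))
      atTop (nhds 0) := by
    have t1 : Tendsto (fun T:ℝ => 2*(M:ℝ)*R/Real.sqrt T) atTop (nhds 0) :=
      Tendsto.div_atTop tendsto_const_nhds tendsto_sqrt_atTop'
    have t2 : Tendsto (fun T:ℝ => c2/Real.sqrt (Real.sqrt T)) atTop (nhds 0) :=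
      Tendsto.div_atTop tendsto_const_nhds (tendsto_sqrt_atTop'.comp tendsto_sqrt_atTop')
    have h := t1.add t2
    rwa [add_zero] at h
  have hgev : ∀ᶠ T:ℝ in atTop,
      2*(M:ℝ)*R/Real.sqrt T + c2/Real.sqrt (Real.sqrt T) ≤ s*Δ/M :=
    hgt.eventually_le_const (div_pos (mul_pos hs hΔ) hM0)
  -- main eventual bound
  have hmain : ∀ᶠ T:ℝ in atTop,
      Real.sqrt T * Lloss M P f α R T ≤ 2 * Real.sqrt ((M:ℝ)*Δ/f) := by
    filter_upwards [hgev, eventually_ge_atTop (1:ℝ)] with T hgT hT1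
    have hT0 : (0:ℝ) < T := by linarith
    rw [Lloss, htarget]
    obtain ⟨r, hrdef⟩ : ∃ r, r = Real.sqrt T := ⟨_, rfl⟩
    rw [← hrdef]
    rw [← hrdef] at hgT
    have hr0 : 0 < r := hrdef ▸ Real.sqrt_pos.2 hT0
    have hrr : r * r = T := hrdef ▸ Real.mul_self_sqrt hT0.le
    obtain ⟨u, hudef⟩ : ∃ u, u = Real.sqrt r := ⟨_, rfl⟩
    rw [← hudef] at hgT
    have hu0 : 0 < u := hudef ▸ Real.sqrt_pos.2 hr0
    have huu : u * u = r := hudef ▸ Real.mul_self_sqrt hr0.le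
    obtain ⟨x, hxd⟩ : ∃ x, x = xCAB M P f α T := ⟨_, rfl⟩
    rw [← hxd]
    have hx : x = s * r := by rw [hxd, hrdef]; exact hxeq T hT0.le
    have hx0 : 0 < x := by rw [hx]; exact mul_pos hs hr0
    obtain ⟨n, hnd⟩ : ∃ n, n = nCAB M P f α T := ⟨_, rfl⟩
    rw [← hnd]
    have hnle : (n:ℝ) ≤ x / M := by
      rw [hnd, nCAB, ← hxd]
      exact Nat.floor_le (div_nonneg hx0.le hM0.le)
    obtain ⟨S, hSd⟩ : ∃ S, S = ∑ β ∈ Finset.Icc 2 (n-1), Dloss M P f α β := ⟨_, rfl⟩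
    rw [← hSd]
    obtain ⟨y, hyd⟩ : ∃ y,
        y = Real.log (1 + ((M:ℝ) - 1) * P / M / (1 + f * x * P / M)) := ⟨_, rfl⟩
    rw [← hyd]
    -- bound on the sum S
    have hSa : S ≤ ((Finset.Icc 2 (n-1)).card : ℝ)*Δ
        + c * ∑ β ∈ Finset.Icc 2 (n-1), (1/β:ℝ) := by
      rw [hSd]
      calc ∑ β ∈ Finset.Icc 2 (n-1), Dloss M P f α β
          ≤ ∑ β ∈ Finset.Icc 2 (n-1), (Δ + c*(1/β)) := by
            apply Finset.sum_le_sum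
            intro β hβ
            exact hDle β (le_trans (by norm_num) (Finset.mem_Icc.1 hβ).1)
        _ = ((Finset.Icc 2 (n-1)).card : ℝ)*Δ
            + c * ∑ β ∈ Finset.Icc 2 (n-1), (1/β:ℝ) := by
            rw [Finset.sum_add_distrib, Finset.sum_const, nsmul_eq_mul, Finset.mul_sum]
    have hcard : ((Finset.Icc 2 (n-1)).card : ℝ) ≤ (n:ℝ) := by
      have : (Finset.Icc 2 (n-1)).card ≤ n := by rw [Nat.card_Icc]; omega
      exact_mod_cast this
    have hsx : Real.sqrt (x/(M:ℝ)) = w * u := by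
      rw [hx, show s*r/(M:ℝ) = s/M*r by ring,
        Real.sqrt_mul (div_nonneg hs.le hM0.le), hwdef, hudef]
    have hharm : ∑ β ∈ Finset.Icc 2 (n-1), (1/β:ℝ) ≤ 2*(w*u) := by
      calc ∑ β ∈ Finset.Icc 2 (n-1), (1/β:ℝ) ≤ 2 * Real.sqrt ((n-1:ℕ):ℝ) :=
            harmonic_sqrt (n-1)
        _ ≤ 2 * (w*u) := by
            rw [← hsx]
            have h1 : ((n-1:ℕ):ℝ) ≤ (n:ℝ) := by exact_mod_cast Nat.sub_le n 1
            have h2 : Real.sqrt ((n-1:ℕ):ℝ) ≤ Real.sqrt (x/M) :=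
              Real.sqrt_le_sqrt (h1.trans hnle)
            linarith only [h2]
    have hS : S ≤ (x/M)*Δ + c*(2*(w*u)) := by
      have b1 : ((Finset.Icc 2 (n-1)).card : ℝ)*Δ ≤ (x/M)*Δ :=
        mul_le_mul_of_nonneg_right (hcard.trans hnle) hΔ.le
      have b2 : c * ∑ β ∈ Finset.Icc 2 (n-1), (1/β:ℝ) ≤ c*(2*(w*u)) :=
        mul_le_mul_of_nonneg_left hharm hc0
      linarith only [hSa, b1, b2]
    -- bound on the log term
    have hy0 : 0 ≤ y := by
      rw [hyd]
      apply Real.log_nonneg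
      have : 0 ≤ ((M:ℝ) - 1) * P / M / (1 + f * x * P / M) :=
        div_nonneg (div_nonneg (mul_nonneg (by linarith) hP.le) hM0.le)
          (by positivity)
      linarith
    have hyle : y ≤ ((M:ℝ)-1)/(f*x) := by
      have hnum : 0 ≤ ((M:ℝ) - 1) * P / M :=
        div_nonneg (mul_nonneg (by linarith) hP.le) hM0.le
      have hd2 : (0:ℝ) < f * x * P / M := div_pos (mul_pos (mul_pos hf hx0) hP) hM0
      have hd1 : (0:ℝ) < 1 + f * x * P / M := by linarith
      have ht0 : 0 ≤ ((M:ℝ) - 1) * P / M / (1 + f * x * P / M) :=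
        div_nonneg hnum hd1.le
      have h1 : y ≤ ((M:ℝ) - 1) * P / M / (1 + f * x * P / M) := by
        rw [hyd]
        have := Real.log_le_sub_one_of_pos (show (0:ℝ) <
          1 + ((M:ℝ) - 1) * P / M / (1 + f * x * P / M) by linarith)
        linarith
      have h2 : ((M:ℝ) - 1) * P / M / (1 + f * x * P / M)
          ≤ ((M:ℝ) - 1) * P / M / (f * x * P / M) :=
        div_le_div_of_nonneg_left hnum hd2 (by linarith)
      have h3 : ((M:ℝ) - 1) * P / M / (f * x * P / M) = ((M:ℝ)-1)/(f*x) := by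
        field_simp
      linarith only [h1, h2, h3]
    -- assemble
    rw [show T = r*r from hrr.symm]
    have expand : r * (2 * (M:ℝ) / (r*r) * R + (M:ℝ)/(r*r) * S + (1 - x/(r*r)) * y)
        = r * (2 * (M:ℝ) / (r*r) * R) + r * ((M:ℝ)/(r*r) * S)
          + r * ((1 - x/(r*r)) * y) := by
      ring
    rw [expand]
    have h1 : r * (2 * (M:ℝ) / (r*r) * R) = 2*(M:ℝ)*R/r := by
      field_simp
    have h2 : r * ((M:ℝ)/(r*r) * S) ≤ s*Δ + c2/u := by
      have e : r * ((M:ℝ)/(r*r) * ((x/M)*Δ + c*(2*(w*u)))) = s*Δ + c2/u := by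
        rw [hc2def, hx, ← huu]
        field_simp
      calc r * ((M:ℝ)/(r*r) * S) ≤ r * ((M:ℝ)/(r*r) * ((x/M)*Δ + c*(2*(w*u)))) := by
            apply mul_le_mul_of_nonneg_left _ hr0.le
            exact mul_le_mul_of_nonneg_left hS (div_nonneg hM0.le (by positivity))
        _ = s*Δ + c2/u := e
    have h3 : r * ((1 - x/(r*r)) * y) ≤ ((M:ℝ)-1)*(s*Δ)/M := by
      have hq0 : 0 ≤ x/(r*r) := div_nonneg hx0.le (by positivity)
      have hstep1 : r * ((1 - x/(r*r)) * y) ≤ r * y := by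
        have e : r * ((1 - x/(r*r)) * y) = r*y - r*((x/(r*r))*y) := by ring
        have hp : 0 ≤ r*((x/(r*r))*y) := mul_nonneg hr0.le (mul_nonneg hq0 hy0)
        linarith only [e, hp]
      have hstep2 : r * y ≤ r * (((M:ℝ)-1)/(f*x)) :=
        mul_le_mul_of_nonneg_left hyle hr0.le
      have hstep3 : r * (((M:ℝ)-1)/(f*x)) = ((M:ℝ)-1)/(f*s) := by
        rw [hx]
        field_simp
      have hstep4 : ((M:ℝ)-1)/(f*s) = ((M:ℝ)-1)*(s*Δ)/M := by
        rw [div_eq_div_iff (mul_pos hf hs).ne' hM0.ne']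
        linear_combination (1-(M:ℝ)) * hfsΔ
      linarith only [hstep1, hstep2, hstep3, hstep4]
    have hsplit : s*Δ/M + ((M:ℝ)-1)*(s*Δ)/M = s*Δ := by
      field_simp
      ring
    linarith only [hgT, h1, h2, h3, hsplit]
  -- eventual nonnegativity for coboundedness
  have hnn : ∀ᶠ T:ℝ in atTop, (0:ℝ) ≤ Real.sqrt T * Lloss M P f α R T := by
    filter_upwards [eventually_ge_atTop (max 1 (s*s))] with T hT
    have hT1 : (1:ℝ) ≤ T := le_trans (le_max_left _ _) hT
    have hTs : s*s ≤ T := le_trans (le_max_right _ _) hT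
    have hT0 : (0:ℝ) < T := by linarith
    have hx : xCAB M P f α T = s * Real.sqrt T := hxeq T hT0.le
    have hxT : xCAB M P f α T ≤ T := by
      rw [hx]
      have h1 : s ≤ Real.sqrt T := by
        rw [show s = Real.sqrt (s*s) from (Real.sqrt_mul_self hs.le).symm]
        exact Real.sqrt_le_sqrt hTs
      calc s * Real.sqrt T ≤ Real.sqrt T * Real.sqrt T :=
            mul_le_mul_of_nonneg_right h1 (Real.sqrt_nonneg T)
        _ = T := Real.mul_self_sqrt hT0.le
    apply mul_nonneg (Real.sqrt_nonneg T)
    rw [Lloss]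
    have t1 : 0 ≤ (2 * (M:ℝ) / T) * R := mul_nonneg (by positivity) hR
    have t2 : 0 ≤ ((M:ℝ)/T) * ∑ β ∈ Finset.Icc 2 (nCAB M P f α T - 1), Dloss M P f α β :=
      mul_nonneg (by positivity) (Finset.sum_nonneg fun β _ => hD0 β)
    have t3 : 0 ≤ (1 - xCAB M P f α T / T) *
        Real.log (1 + (((M:ℝ) - 1) * P / M) / (1 + f * xCAB M P f α T * P / M)) := by
      apply mul_nonneg
      · rw [sub_nonneg, div_le_one hT0]
        exact hxT
      · apply Real.log_nonneg
        have hx0 : 0 ≤ xCAB M P f α T := Real.sqrt_nonneg _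
        have : 0 ≤ (((M:ℝ) - 1) * P / M) / (1 + f * xCAB M P f α T * P / M) :=
          div_nonneg (div_nonneg (mul_nonneg (by linarith) hP.le) hM0.le) (by positivity)
        linarith
    linarith
  exact Filter.limsup_le_of_le (Filter.isCoboundedUnder_le_of_eventually_le _ hnn) hmain
end
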